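/- For every real number x, φ(x)/Φ(x) + x > 0, where φ and Φ are the pdf and cdf of the standard normal distribution. -/

import Mathlib

noncomputable def stdNormalPdf (x : ℝ) : ℝ :=
  (Real.sqrt (2 * Real.pi))⁻¹ * Real.exp (-x ^ 2 / 2)

noncomputable def stdNormalCdf (x : ℝ) : ℝ :=
  ∫ t in Set.Iic x, stdNormalPdf t

open MeasureTheory Set Real Filter

lemma pdf_pos (t : ℝ) : 0 < stdNormalPdf t := by
  unfold stdNormalPdf
  have := Real.pi_pos
  positivity

lemma pdf_eq (t : ℝ) :
    stdNormalPdf t = (Real.sqrt (2 * Real.pi))⁻¹ * Real.exp (-(1/2) * t ^ 2) := by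
  unfold stdNormalPdf; ring_nf

lemma pdf_integrable : Integrable stdNormalPdf := by
  have h := (integrable_exp_neg_mul_sq (by norm_num : (0:ℝ) < 1/2)).const_mul
    (Real.sqrt (2 * Real.pi))⁻¹
  exact h.congr (by filter_upwards with t using (pdf_eq t).symm)

lemma mul_pdf_integrable : Integrable (fun t : ℝ => t * stdNormalPdf t) := by
  have h := (integrable_mul_exp_neg_mul_sq (by norm_num : (0:ℝ) < 1/2)).const_mul
    (Real.sqrt (2 * Real.pi))⁻¹
  exact h.congr (by filter_upwards with t; rw [pdf_eq]; ring)

lemma neg_mul_pdf_integrable : Integrable (fun t : ℝ => -t * stdNormalPdf t) :=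
  mul_pdf_integrable.neg.congr (by filter_upwards with t; simp)

lemma pdf_hasDerivAt (t : ℝ) :
    HasDerivAt stdNormalPdf (-t * stdNormalPdf t) t := by
  have h1 : HasDerivAt (fun s : ℝ => -s ^ 2 / 2) (-t) t := by
    have := (hasDerivAt_pow 2 t).neg.div_const 2
    exact this.congr_deriv (by norm_num; ring)
  have h2 := (h1.exp.const_mul (Real.sqrt (2 * Real.pi))⁻¹)
  have : stdNormalPdf = fun s : ℝ =>
      (Real.sqrt (2 * Real.pi))⁻¹ * Real.exp (-s ^ 2 / 2) := rfl
  rw [this]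
  refine h2.congr_deriv ?_
  beta_reduce
  ring

lemma pdf_tendsto_atBot : Tendsto stdNormalPdf atBot (nhds 0) := by
  have h1 : Tendsto (fun t : ℝ => -t ^ 2 / 2) atBot atBot := by
    have habs : Tendsto (fun t : ℝ => |t| ^ 2) atBot atTop :=
      (tendsto_pow_atTop (by norm_num)).comp tendsto_abs_atBot_atTop
    have hsq : Tendsto (fun t : ℝ => t ^ 2) atBot atTop := by
      simpa [sq_abs] using habs
    have := (tendsto_neg_atTop_atBot.comp hsq).atBot_div_const (by norm_num : (0:ℝ) < 2)
    exact this.congr (by intro t; simp [Function.comp])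
  have h2 : Tendsto (fun t : ℝ => Real.exp (-t ^ 2 / 2)) atBot (nhds 0) :=
    Real.tendsto_exp_atBot.comp h1
  have h3 := h2.const_mul (Real.sqrt (2 * Real.pi))⁻¹
  rw [mul_zero] at h3
  exact h3.congr fun t => rfl

lemma key_integral (x : ℝ) :
    ∫ t in Set.Iic x, -t * stdNormalPdf t = stdNormalPdf x := by
  have := integral_Iic_of_hasDerivAt_of_tendsto' (a := x)
    (f := stdNormalPdf) (f' := fun t => -t * stdNormalPdf t)
    (fun t _ => pdf_hasDerivAt t)
    (neg_mul_pdf_integrable.integrableOn)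
    pdf_tendsto_atBot
  simpa using this

lemma key_pos (x : ℝ) : 0 < stdNormalPdf x + x * stdNormalCdf x := by
  have hg : IntegrableOn (fun t => (x - t) * stdNormalPdf t) (Set.Iic x) := by
    have : Integrable (fun t : ℝ => (x - t) * stdNormalPdf t) := by
      have := (pdf_integrable.const_mul x).sub mul_pdf_integrable
      exact this.congr (by filter_upwards with t; simp only [Pi.sub_apply]; ring)
    exact this.integrableOn
  have hpos : 0 < ∫ t in Set.Iic x, (x - t) * stdNormalPdf t := by
    rw [setIntegral_pos_iff_support_of_nonneg_ae ?_ hg]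
    · have hsub : Set.Iio x ⊆ Function.support (fun t => (x - t) * stdNormalPdf t) ∩ Set.Iic x := by
        intro t ht
        refine ⟨?_, Set.Iio_subset_Iic_self ht⟩
        simp only [Function.mem_support]
        exact mul_ne_zero (sub_ne_zero.2 (ne_of_gt ht.out)) (pdf_pos t).ne'
      calc (0 : ENNReal) < volume (Set.Iio x) := by simp
        _ ≤ _ := measure_mono hsub
    · filter_upwards [ae_restrict_mem measurableSet_Iic] with t ht
      exact mul_nonneg (by linarith [ht.out]) (pdf_pos t).le
  have hsplit : ∫ t in Set.Iic x, (x - t) * stdNormalPdf t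
      = x * stdNormalCdf x + stdNormalPdf x := by
    have h1 : ∫ t in Set.Iic x, (x - t) * stdNormalPdf t
        = (∫ t in Set.Iic x, x * stdNormalPdf t) + ∫ t in Set.Iic x, -t * stdNormalPdf t := by
      rw [← integral_add ((pdf_integrable.const_mul x).integrableOn)
        (neg_mul_pdf_integrable.integrableOn)]
      congr 1; funext t; ring
    rw [h1, key_integral, integral_const_mul]
    rfl
  rw [hsplit] at hpos
  linarith

theorem stmt_0 (x : ℝ) : stdNormalPdf x / stdNormalCdf x + x > 0 := by
  have hcdf : 0 < stdNormalCdf x := by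
    unfold stdNormalCdf
    rw [setIntegral_pos_iff_support_of_nonneg_ae ?_ pdf_integrable.integrableOn]
    · have : Function.support stdNormalPdf ∩ Set.Iic x = Set.Iic x := by
        ext t; simp [Function.mem_support, (pdf_pos t).ne']
      rw [this]; simp
    · filter_upwards with t using (pdf_pos t).le
  have hkey := key_pos x
  have : stdNormalPdf x / stdNormalCdf x + x
      = (stdNormalPdf x + x * stdNormalCdf x) / stdNormalCdf x := by
    field_simp
  rw [this]
  positivity
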